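/- Fix r, s > 0, 𝔷 = 𝔞+i𝔟 with 𝔟 > 0, and ξ ∈ ℝ². Then Σ_{x,y∈ℤ} Ψ_{𝔷,ξ}(rx, sy) = (1/(r√(2𝔟))) Σ_{x,y∈ℤ} exp(−2πs²𝔟y² − (π/(2r²𝔟))(x + 2rs𝔞y + r⟨ξ,(1,1)⟩)² + 2πiy·s⟨ξ,(1,−1)⟩), where Ψ_{𝔷,ξ}(x,y) = exp(πi(4𝔞xy + 2i𝔟(x²+y²)) + 2πix⟨ξ,(1,1)⟩ + 2πiy⟨ξ,(1,−1)⟩). -/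

import Mathlib

/-!
Poisson summation in the first variable alone. For fixed `y` the summand `Ψ(rx, sy)` is
`w(y) · exp(-π α x² + 2π i c(y) x)` with `α = 2 r² 𝔟`, `c(y) = 2 r s 𝔞 y + r ⟨ξ,(1,1)⟩`
and `w(y) = exp(-2π s² 𝔟 y² + 2π i y s ⟨ξ,(1,−1)⟩)`, so the Gaussian transformation
formula replaces the row sum by `α^(-1/2) · w(y) · ∑ₓ exp(-(π/α) (x + c(y))²)`.
Both double series converge absolutely, so they can be summed row by row; for the transformed
series this rests on the shifted Gaussian sums `∑ₓ exp(-κ (x + c)²)` being bounded uniformly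
in `c`, which holds because they are `1`-periodic in `c`.
-/

open Complex

/-- `Ψ_{𝔷,ξ}(x,y) = exp(πi(4𝔞xy + 2i𝔟(x²+y²)) + 2πix⟨ξ,(1,1)⟩ + 2πiy⟨ξ,(1,−1)⟩)`. -/
noncomputable def PsiQ (a b : ℝ) (ξ : ℝ × ℝ) (x y : ℝ) : ℂ :=
  Complex.exp (Real.pi * Complex.I * (4 * (a : ℂ) * x * y
      + 2 * Complex.I * (b : ℂ) * ((x : ℂ) ^ 2 + (y : ℂ) ^ 2))
    + 2 * Real.pi * Complex.I * (x : ℂ) * ((ξ.1 : ℂ) + (ξ.2 : ℂ))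
    + 2 * Real.pi * Complex.I * (y : ℂ) * ((ξ.1 : ℂ) - (ξ.2 : ℂ)))

open Real

lemma exp_neg_mul_add_sq_le {κ : ℝ} (hκ : 0 ≤ κ) (x t : ℝ) :
    rexp (-κ * (x + t) ^ 2) ≤ rexp (κ * t ^ 2) * rexp (-(κ / 2) * x ^ 2) := by
  rw [← Real.exp_add, Real.exp_le_exp]
  nlinarith [mul_nonneg hκ (sq_nonneg (x + 2 * t))]

lemma summable_exp_neg_mul_int_sq {κ : ℝ} (hκ : 0 < κ) :
    Summable fun n : ℤ => rexp (-κ * n ^ 2) := by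
  have hτ : (κ / π * I).im = κ / π := by simp
  convert ((summable_jacobiTheta₂_term_iff 0 _).2 (hτ ▸ div_pos hκ pi_pos)).norm using 2 with n
  rw [norm_jacobiTheta₂_term, hτ, zero_im]
  congr 1
  field_simp
  ring

lemma summable_exp_neg_mul_int_add_sq {κ : ℝ} (hκ : 0 < κ) (c : ℝ) :
    Summable fun n : ℤ => rexp (-κ * (n + c) ^ 2) :=
  ((summable_exp_neg_mul_int_sq (half_pos hκ)).mul_left (rexp (κ * c ^ 2))).of_nonneg_of_le
    (fun _ => (Real.exp_pos _).le) fun n => exp_neg_mul_add_sq_le hκ.le n c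

lemma tsum_exp_neg_mul_int_add_sq_le {κ : ℝ} (hκ : 0 < κ) (c : ℝ) :
    ∑' n : ℤ, rexp (-κ * (n + c) ^ 2) ≤ rexp κ * ∑' n : ℤ, rexp (-(κ / 2) * n ^ 2) := by
  have hperiodic : ∑' n : ℤ, rexp (-κ * (n + c) ^ 2)
      = ∑' n : ℤ, rexp (-κ * (n + Int.fract c) ^ 2) := by
    rw [← (Equiv.subRight ⌊c⌋).tsum_eq]
    refine tsum_congr fun n => ?_
    rw [Equiv.subRight_apply, Int.cast_sub, Int.fract]
    ring_nf
  have hfract : Int.fract c ^ 2 ≤ 1 := by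
    nlinarith [Int.fract_nonneg c, Int.fract_lt_one c]
  rw [hperiodic, ← tsum_mul_left]
  refine (summable_exp_neg_mul_int_add_sq hκ _).tsum_le_tsum (fun n => ?_)
    ((summable_exp_neg_mul_int_sq (half_pos hκ)).mul_left _)
  calc rexp (-κ * (n + Int.fract c) ^ 2)
      ≤ rexp (κ * Int.fract c ^ 2) * rexp (-(κ / 2) * n ^ 2) := exp_neg_mul_add_sq_le hκ.le _ _
    _ ≤ rexp κ * rexp (-(κ / 2) * n ^ 2) := by gcongr; nlinarith

lemma summable_exp_neg_mul_int_add_sq_mul {β : Type*} {κ : ℝ} (hκ : 0 < κ) {v : β → ℝ}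
    (hv : Summable v) (hv0 : 0 ≤ v) (c : β → ℝ) :
    Summable fun p : ℤ × β => rexp (-κ * (p.1 + c p.2) ^ 2) * v p.2 := by
  have hrows : ∀ y, ∑' x : ℤ, rexp (-κ * (x + c y) ^ 2) * v y
      ≤ (rexp κ * ∑' n : ℤ, rexp (-(κ / 2) * n ^ 2)) * v y := fun y => by
    rw [tsum_mul_right]
    exact mul_le_mul_of_nonneg_right (tsum_exp_neg_mul_int_add_sq_le hκ (c y)) (hv0 y)
  have hswap : Summable fun q : β × ℤ => rexp (-κ * (q.2 + c q.1) ^ 2) * v q.1 :=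
    (summable_prod_of_nonneg fun _ => mul_nonneg (Real.exp_pos _).le (hv0 _)).2
      ⟨fun y => (summable_exp_neg_mul_int_add_sq hκ (c y)).mul_right (v y),
        (hv.mul_left _).of_nonneg_of_le
          (fun y => tsum_nonneg fun _ => mul_nonneg (Real.exp_pos _).le (hv0 y)) hrows⟩
  exact hswap.prod_symm

theorem Complex.norm_exp_ofReal_add_ofReal_mul_I (u v : ℝ) : ‖cexp (u + v * I)‖ = rexp u := by
  rw [Complex.exp_add, norm_mul, norm_exp_ofReal, norm_exp_ofReal_mul_I, mul_one]

theorem Complex.tsum_exp_neg_quadratic_ofReal {α : ℝ} (hα : 0 < α) (c : ℝ) :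
    ∑' n : ℤ, cexp (-π * α * n ^ 2 + 2 * π * I * c * n)
      = 1 / √α * ∑' n : ℤ, cexp (-π / α * (n + c) ^ 2) := by
  have hsqrt : (α : ℂ) ^ (1 / 2 : ℂ) = √α := by
    rw [Real.sqrt_eq_rpow, ofReal_cpow hα.le]; norm_num
  simp only [mul_assoc (2 * (π : ℂ)) I]
  rw [Complex.tsum_exp_neg_quadratic (by simpa using hα), hsqrt,
    ← (Equiv.neg ℤ).tsum_eq (fun n : ℤ => cexp (-π / α * (n + c) ^ 2))]
  congr 2 with n
  rw [← mul_assoc I, I_mul_I, Equiv.neg_apply, Int.cast_neg]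
  ring_nf

theorem tsum_prod_eq_mul_of_forall_tsum_eq {β γ 𝕜 : Type*} [NormedField 𝕜] [CompleteSpace 𝕜]
    {F G : β × γ → 𝕜} (hF : Summable F) (hG : Summable G) (C : 𝕜)
    (h : ∀ y, ∑' x, F (x, y) = C * ∑' x, G (x, y)) :
    ∑' p, F p = C * ∑' p, G p := by
  have hfibre {H : β × γ → 𝕜} (hH : Summable H) : ∑' p, H p = ∑' y, ∑' x, H (x, y) :=
    ((Equiv.prodComm γ β).tsum_eq H).symm.trans hH.prod_symm.tsum_prod
  rw [hfibre hF, hfibre hG, ← tsum_mul_left]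
  exact tsum_congr h

theorem tsum_prod_mul_exp_neg_quadratic {β : Type*} {α : ℝ} (hα : 0 < α) {w : β → ℂ}
    (hw : Summable fun y => ‖w y‖) (c : β → ℝ) :
    ∑' p : ℤ × β, w p.2 * cexp (-π * α * p.1 ^ 2 + 2 * π * I * c p.2 * p.1)
      = 1 / √α * ∑' p : ℤ × β, w p.2 * cexp (-π / α * (p.1 + c p.2) ^ 2) := by
  have hF : Summable fun p : ℤ × β =>
      w p.2 * cexp (-π * α * p.1 ^ 2 + 2 * π * I * c p.2 * p.1) := by
    refine .of_norm_bounded ((summable_exp_neg_mul_int_sq (mul_pos pi_pos hα)).mul_of_nonneg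
      hw (fun _ => (Real.exp_pos _).le) fun _ => norm_nonneg _) fun p => le_of_eq ?_
    have hexponent : -π * α * (p.1 : ℂ) ^ 2 + 2 * π * I * c p.2 * p.1
        = ((-(π * α) * p.1 ^ 2 : ℝ) : ℂ) + ((2 * π * c p.2 * p.1 : ℝ) : ℂ) * I := by
      push_cast; ring
    rw [norm_mul, mul_comm, hexponent, norm_exp_ofReal_add_ofReal_mul_I]
  have hG : Summable fun p : ℤ × β => w p.2 * cexp (-π / α * (p.1 + c p.2) ^ 2) := by
    refine .of_norm_bounded (summable_exp_neg_mul_int_add_sq_mul (div_pos pi_pos hα) hw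
      (fun _ => norm_nonneg _) c) fun p => le_of_eq ?_
    have hexponent :
        -π / α * ((p.1 : ℂ) + c p.2) ^ 2 = ((-(π / α) * (p.1 + c p.2) ^ 2 : ℝ) : ℂ) := by
      push_cast; ring
    rw [norm_mul, mul_comm, hexponent, norm_exp_ofReal]
  refine tsum_prod_eq_mul_of_forall_tsum_eq hF hG _ fun y => ?_
  dsimp only
  rw [tsum_mul_left, tsum_mul_left, Complex.tsum_exp_neg_quadratic_ofReal hα]
  ring

theorem stmt_12 (r s a b : ℝ) (hr : 0 < r) (hs : 0 < s) (hb : 0 < b) (ξ : ℝ × ℝ) :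
    (∑' p : ℤ × ℤ, PsiQ a b ξ (r * p.1) (s * p.2))
      = (1 / (r * Real.sqrt (2 * b))) *
        ∑' p : ℤ × ℤ,
          Complex.exp (-(2 * Real.pi * s ^ 2 * b * (p.2 : ℂ) ^ 2)
            - (Real.pi / (2 * r ^ 2 * b)) *
                ((p.1 : ℂ) + 2 * r * s * a * (p.2 : ℂ) + r * ((ξ.1 : ℂ) + (ξ.2 : ℂ))) ^ 2
            + 2 * Real.pi * Complex.I * (p.2 : ℂ) * (s * ((ξ.1 : ℂ) - (ξ.2 : ℂ)))) := by
  have hα : 0 < 2 * r ^ 2 * b := by positivity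
  have hsqrt : ((√(2 * r ^ 2 * b) : ℝ) : ℂ) = r * √(2 * b) := by
    rw [show 2 * r ^ 2 * b = r ^ 2 * (2 * b) by ring, Real.sqrt_mul (sq_nonneg r),
      Real.sqrt_sq hr.le, ofReal_mul]
  let w (y : ℤ) : ℂ :=
    cexp ((-(2 * π * s ^ 2 * b) * y ^ 2 : ℝ) + (2 * π * y * (s * (ξ.1 - ξ.2)) : ℝ) * I)
  have hw : Summable fun y => ‖w y‖ := by
    simp only [w, norm_exp_ofReal_add_ofReal_mul_I]
    exact summable_exp_neg_mul_int_sq (by positivity)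
  have hrow (p : ℤ × ℤ) : PsiQ a b ξ (r * p.1) (s * p.2) = w p.2 * cexp (-π * (2 * r ^ 2 * b : ℝ)
      * p.1 ^ 2 + 2 * π * I * (2 * r * s * a * p.2 + r * (ξ.1 + ξ.2) : ℝ) * p.1) := by
    rw [PsiQ, ← Complex.exp_add]
    congr 1
    push_cast
    linear_combination 2 * π * b * ((r * p.1) ^ 2 + (s * p.2) ^ 2) * I_sq
  rw [tsum_congr hrow, tsum_prod_mul_exp_neg_quadratic hα hw
    fun y => 2 * r * s * a * y + r * (ξ.1 + ξ.2), hsqrt]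
  congr 1
  refine tsum_congr fun p => ?_
  rw [← Complex.exp_add]
  congr 1
  push_cast
  ring
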